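/- On the open set U = {(x, y, X, Y, z) ∈ ℝ⁵ : z > 0, x² + y² > 0, X² + Y² > 0}, write r = √(x² + y²) and R = √(X² + Y²), and define the smooth function σ̃ := ((r − R)/√2)·(1 − (r − R)²/(3z²)). Then there exists a smooth function T̃ on U such that at every point p ∈ U lying on the null cone {x² + y² + X² + Y² = z²} one has (∂_x σ̃)² + (∂_y σ̃)² + (∂_X σ̃)² + (∂_Y σ̃)² − (∂_z σ̃)² − (2/3)·σ̃·(∂²_x + ∂²_y + ∂²_X + ∂²_Y − ∂²_z)σ̃ = 1 + σ̃⁴·T̃(p). (This is the ambient Minkowski-space computation, using the formula S(ḡ, σ) = [|dσ̃|²_{g̃} − (2/3)σ̃ Δ^{g̃} σ̃]^* for homogeneity-one functions on the cone, showing that the induced defining function for the Clifford torus solves the singular Yamabe equation to fourth order, hence that the Clifford torus is a Willmore surface in S³.) -/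
import Mathlib


open RealInnerProductSpace

/-- Partial derivative in the `i`-th coordinate direction of a function on `ℝ⁵`. -/
noncomputable def pd5 (i : Fin 5) (g : EuclideanSpace ℝ (Fin 5) → ℝ)
    (p : EuclideanSpace ℝ (Fin 5)) : ℝ :=
  fderiv ℝ g p (EuclideanSpace.single i 1)

/-- `r = √(x² + y²)`, with `(x, y) = (p 0, p 1)`. -/
noncomputable def rad5 (p : EuclideanSpace ℝ (Fin 5)) : ℝ :=
  Real.sqrt ((p 0) ^ 2 + (p 1) ^ 2)

/-- `R = √(X² + Y²)`, with `(X, Y) = (p 2, p 3)`. -/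
noncomputable def Rad5 (p : EuclideanSpace ℝ (Fin 5)) : ℝ :=
  Real.sqrt ((p 2) ^ 2 + (p 3) ^ 2)

/-- The homogeneity-one ambient defining function
`σ̃ = ((r − R)/√2)·(1 − (r − R)²/(3z²))` for the Clifford torus, on `ℝ⁵` with
coordinates `(x, y, X, Y, z) = (p 0, p 1, p 2, p 3, p 4)`. -/
noncomputable def sigmaTilde (p : EuclideanSpace ℝ (Fin 5)) : ℝ :=
  ((rad5 p - Rad5 p) / Real.sqrt 2) *
    (1 - (rad5 p - Rad5 p) ^ 2 / (3 * (p 4) ^ 2))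

/-- The open set `U = {z > 0, x² + y² > 0, X² + Y² > 0}` on which `σ̃` is smooth. -/
def U12 : Set (EuclideanSpace ℝ (Fin 5)) :=
  {p | 0 < p 4 ∧ 0 < (p 0) ^ 2 + (p 1) ^ 2 ∧ 0 < (p 2) ^ 2 + (p 3) ^ 2}

/-! ### Auxiliary machinery -/

local notation "E5" => EuclideanSpace ℝ (Fin 5)

/-- coordinate projection as a CLM -/
noncomputable abbrev prj (i : Fin 5) : EuclideanSpace ℝ (Fin 5) →L[ℝ] ℝ :=
  EuclideanSpace.proj i

lemma pd5_eq {g : E5 → ℝ} {L : E5 →L[ℝ] ℝ} {p : E5} (h : HasFDerivAt g L p) (i : Fin 5) :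
    pd5 i g p = L (EuclideanSpace.single i 1) := by
  rw [pd5, h.fderiv]

/-- first derivative candidate functions -/
noncomputable def G0 (p : E5) : ℝ :=
  p 0 * ((1 - (rad5 p - Rad5 p) ^ 2 / (p 4) ^ 2) / (rad5 p * Real.sqrt 2))

noncomputable def G1 (p : E5) : ℝ :=
  p 1 * ((1 - (rad5 p - Rad5 p) ^ 2 / (p 4) ^ 2) / (rad5 p * Real.sqrt 2))

noncomputable def G2 (p : E5) : ℝ :=
  -(p 2 * ((1 - (rad5 p - Rad5 p) ^ 2 / (p 4) ^ 2) / (Rad5 p * Real.sqrt 2)))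

noncomputable def G3 (p : E5) : ℝ :=
  -(p 3 * ((1 - (rad5 p - Rad5 p) ^ 2 / (p 4) ^ 2) / (Rad5 p * Real.sqrt 2)))

noncomputable def G4 (p : E5) : ℝ :=
  2 * (rad5 p - Rad5 p) ^ 3 / (3 * (Real.sqrt 2 * (p 4) ^ 3))

/-- derivative of `rad5` -/
lemma rad5_fderiv (p : E5) (h : 0 < (p 0) ^ 2 + (p 1) ^ 2) :
    ∃ L : E5 →L[ℝ] ℝ, HasFDerivAt rad5 L p ∧
      L (EuclideanSpace.single 0 1) = p 0 / rad5 p ∧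
      L (EuclideanSpace.single 1 1) = p 1 / rad5 p ∧
      L (EuclideanSpace.single 2 1) = 0 ∧
      L (EuclideanSpace.single 3 1) = 0 ∧
      L (EuclideanSpace.single 4 1) = 0 := by
  have c0 := (prj 0).hasFDerivAt (x := p)
  have c1 := (prj 1).hasFDerivAt (x := p)
  have h' : p 0 * p 0 + p 1 * p 1 ≠ 0 := by
    have := h.ne'; simpa [pow_two] using this
  have hs := (((c0.mul c0).add (c1.mul c1)).sqrt h' :)
  have hfun : rad5 = fun q : E5 => Real.sqrt (q 0 * q 0 + q 1 * q 1) := by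
    funext q; rw [rad5]; ring_nf
  have hrpos : 0 < rad5 p := Real.sqrt_pos.mpr h
  have hrne : rad5 p ≠ 0 := hrpos.ne'
  rw [hfun] at hrne ⊢
  refine ⟨_, hs, ?_, ?_, ?_, ?_, ?_⟩ <;>
  · simp [EuclideanSpace.single_apply]
    try field_simp
    try ring

/-- derivative of `Rad5` -/
lemma Rad5_fderiv (p : E5) (h : 0 < (p 2) ^ 2 + (p 3) ^ 2) :
    ∃ L : E5 →L[ℝ] ℝ, HasFDerivAt Rad5 L p ∧
      L (EuclideanSpace.single 0 1) = 0 ∧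
      L (EuclideanSpace.single 1 1) = 0 ∧
      L (EuclideanSpace.single 2 1) = p 2 / Rad5 p ∧
      L (EuclideanSpace.single 3 1) = p 3 / Rad5 p ∧
      L (EuclideanSpace.single 4 1) = 0 := by
  have c2 := (prj 2).hasFDerivAt (x := p)
  have c3 := (prj 3).hasFDerivAt (x := p)
  have h' : p 2 * p 2 + p 3 * p 3 ≠ 0 := by
    have := h.ne'; simpa [pow_two] using this
  have hs := (((c2.mul c2).add (c3.mul c3)).sqrt h' :)
  have hfun : Rad5 = fun q : E5 => Real.sqrt (q 2 * q 2 + q 3 * q 3) := by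
    funext q; rw [Rad5]; ring_nf
  have hrpos : 0 < Rad5 p := Real.sqrt_pos.mpr h
  have hrne : Rad5 p ≠ 0 := hrpos.ne'
  rw [hfun] at hrne ⊢
  refine ⟨_, hs, ?_, ?_, ?_, ?_, ?_⟩ <;>
  · simp [EuclideanSpace.single_apply]
    try field_simp
    try ring

set_option maxHeartbeats 2000000 in
/-- first partial derivatives of `sigmaTilde` on `U12` -/
lemma sigma_pd {p : E5} (hp : p ∈ U12) :
    pd5 0 sigmaTilde p = G0 p ∧ pd5 1 sigmaTilde p = G1 p ∧ pd5 2 sigmaTilde p = G2 p ∧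
      pd5 3 sigmaTilde p = G3 p ∧ pd5 4 sigmaTilde p = G4 p := by
  obtain ⟨hz, hxy, hXY⟩ := hp
  have hz0 : p 4 ≠ 0 := hz.ne'
  have hrpos : 0 < rad5 p := Real.sqrt_pos.mpr hxy
  have hRpos : 0 < Rad5 p := Real.sqrt_pos.mpr hXY
  have hr0 : rad5 p ≠ 0 := hrpos.ne'
  have hR0 : Rad5 p ≠ 0 := hRpos.ne'
  have hs2 : Real.sqrt 2 ≠ 0 := by positivity
  obtain ⟨L, hL, L0, L1, L2, L3, L4⟩ := rad5_fderiv p hxy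
  obtain ⟨M, hM, M0, M1, M2, M3, M4⟩ := Rad5_fderiv p hXY
  have c4 := (prj 4).hasFDerivAt (x := p)
  have hu := hL.sub hM
  have hden0 : 3 * (p 4 * p 4) ≠ 0 :=
    mul_ne_zero (by norm_num) (mul_ne_zero hz0 hz0)
  have hdinv := (hasDerivAt_inv hden0).comp_hasFDerivAt p ((c4.mul c4).const_mul (3:ℝ))
  have hB := (hasFDerivAt_const (1:ℝ) p).sub ((hu.mul hu).mul hdinv)
  have hA := hu.mul (hasFDerivAt_const ((Real.sqrt 2)⁻¹) p)
  have heq : sigmaTilde =ᶠ[nhds p] (fun y : E5 => ((rad5 y - Rad5 y) * (Real.sqrt 2)⁻¹) *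
      (1 - (rad5 y - Rad5 y) * (rad5 y - Rad5 y) * (3 * (y 4 * y 4))⁻¹)) :=
    Filter.Eventually.of_forall (fun q => by rw [sigmaTilde]; ring)
  have hst := HasFDerivAt.congr_of_eventuallyEq (hA.mul hB) heq
  refine ⟨?_, ?_, ?_, ?_, ?_⟩ <;>
  · rw [pd5_eq hst]
    simp only [ContinuousLinearMap.add_apply, ContinuousLinearMap.smul_apply,
      ContinuousLinearMap.sub_apply, ContinuousLinearMap.zero_apply,
      ContinuousLinearMap.coe_smul', Pi.smul_apply, smul_eq_mul, PiLp.proj_apply,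
      L0, L1, L2, L3, L4, M0, M1, M2, M3, M4, EuclideanSpace.single_apply]
    norm_num [G0, G1, G2, G3, G4]
    simp only [Fin.reduceEq, if_true, if_false, reduceIte]
    try field_simp
    try ring

set_option maxHeartbeats 2000000 in
/-- second partial derivative `∂₀ G0` -/
lemma G0_pd {p : E5} (hp : p ∈ U12) :
    pd5 0 G0 p =
      ((1 - (rad5 p - Rad5 p) ^ 2 / (p 4) ^ 2) / rad5 p
        - p 0 ^ 2 * (1 - (rad5 p - Rad5 p) ^ 2 / (p 4) ^ 2) / rad5 p ^ 3
        - 2 * (rad5 p - Rad5 p) * p 0 ^ 2 / ((p 4) ^ 2 * rad5 p ^ 2)) / Real.sqrt 2 := by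
  obtain ⟨hz, hxy, hXY⟩ := hp
  have hz0 : p 4 ≠ 0 := hz.ne'
  have hr0 : rad5 p ≠ 0 := (Real.sqrt_pos.mpr hxy).ne'
  have hR0 : Rad5 p ≠ 0 := (Real.sqrt_pos.mpr hXY).ne'
  have hs2 : Real.sqrt 2 ≠ 0 := by positivity
  obtain ⟨L, hL, L0, L1, L2, L3, L4⟩ := rad5_fderiv p hxy
  obtain ⟨M, hM, M0, M1, M2, M3, M4⟩ := Rad5_fderiv p hXY
  have c0 := (prj 0).hasFDerivAt (x := p)
  have c4 := (prj 4).hasFDerivAt (x := p)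
  have hu := hL.sub hM
  have hzzinv := (hasDerivAt_inv (mul_ne_zero hz0 hz0)).comp_hasFDerivAt p (c4.mul c4)
  have hP := (hasFDerivAt_const (1:ℝ) p).sub ((hu.mul hu).mul hzzinv)
  have hrs := hL.mul (hasFDerivAt_const (Real.sqrt 2) p)
  have hrsinv := (hasDerivAt_inv (mul_ne_zero hr0 hs2)).comp_hasFDerivAt p hrs
  have hG := c0.mul (hP.mul hrsinv)
  have heq : G0 =ᶠ[nhds p] (fun y : E5 => y 0 *
      ((1 - (rad5 y - Rad5 y) * (rad5 y - Rad5 y) * (y 4 * y 4)⁻¹) * (rad5 y * Real.sqrt 2)⁻¹)) :=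
    Filter.Eventually.of_forall (fun q => by rw [G0]; ring)
  have hst := HasFDerivAt.congr_of_eventuallyEq hG heq
  rw [pd5_eq hst]
  simp only [ContinuousLinearMap.add_apply, ContinuousLinearMap.smul_apply,
    ContinuousLinearMap.sub_apply, ContinuousLinearMap.zero_apply,
    ContinuousLinearMap.coe_smul', Pi.smul_apply, smul_eq_mul, PiLp.proj_apply,
    L0, L1, L2, L3, L4, M0, M1, M2, M3, M4, EuclideanSpace.single_apply]
  norm_num
  try simp only [Fin.reduceEq, if_true, if_false, reduceIte]
  field_simp
  ring

set_option maxHeartbeats 2000000 in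
/-- second partial derivative `∂₁ G1` -/
lemma G1_pd {p : E5} (hp : p ∈ U12) :
    pd5 1 G1 p =
      ((1 - (rad5 p - Rad5 p) ^ 2 / (p 4) ^ 2) / rad5 p
        - p 1 ^ 2 * (1 - (rad5 p - Rad5 p) ^ 2 / (p 4) ^ 2) / rad5 p ^ 3
        - 2 * (rad5 p - Rad5 p) * p 1 ^ 2 / ((p 4) ^ 2 * rad5 p ^ 2)) / Real.sqrt 2 := by
  obtain ⟨hz, hxy, hXY⟩ := hp
  have hz0 : p 4 ≠ 0 := hz.ne'
  have hr0 : rad5 p ≠ 0 := (Real.sqrt_pos.mpr hxy).ne'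
  have hR0 : Rad5 p ≠ 0 := (Real.sqrt_pos.mpr hXY).ne'
  have hs2 : Real.sqrt 2 ≠ 0 := by positivity
  obtain ⟨L, hL, L0, L1, L2, L3, L4⟩ := rad5_fderiv p hxy
  obtain ⟨M, hM, M0, M1, M2, M3, M4⟩ := Rad5_fderiv p hXY
  have c1 := (prj 1).hasFDerivAt (x := p)
  have c4 := (prj 4).hasFDerivAt (x := p)
  have hu := hL.sub hM
  have hzzinv := (hasDerivAt_inv (mul_ne_zero hz0 hz0)).comp_hasFDerivAt p (c4.mul c4)
  have hP := (hasFDerivAt_const (1:ℝ) p).sub ((hu.mul hu).mul hzzinv)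
  have hrs := hL.mul (hasFDerivAt_const (Real.sqrt 2) p)
  have hrsinv := (hasDerivAt_inv (mul_ne_zero hr0 hs2)).comp_hasFDerivAt p hrs
  have hG := c1.mul (hP.mul hrsinv)
  have heq : G1 =ᶠ[nhds p] (fun y : E5 => y 1 *
      ((1 - (rad5 y - Rad5 y) * (rad5 y - Rad5 y) * (y 4 * y 4)⁻¹) * (rad5 y * Real.sqrt 2)⁻¹)) :=
    Filter.Eventually.of_forall (fun q => by rw [G1]; ring)
  have hst := HasFDerivAt.congr_of_eventuallyEq hG heq
  rw [pd5_eq hst]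
  simp only [ContinuousLinearMap.add_apply, ContinuousLinearMap.smul_apply,
    ContinuousLinearMap.sub_apply, ContinuousLinearMap.zero_apply,
    ContinuousLinearMap.coe_smul', Pi.smul_apply, smul_eq_mul, PiLp.proj_apply,
    L0, L1, L2, L3, L4, M0, M1, M2, M3, M4, EuclideanSpace.single_apply]
  norm_num
  try simp only [Fin.reduceEq, if_true, if_false, reduceIte]
  field_simp
  ring

set_option maxHeartbeats 2000000 in
/-- second partial derivative `∂₂ G2` -/
lemma G2_pd {p : E5} (hp : p ∈ U12) :
    pd5 2 G2 p =
      (-((1 - (rad5 p - Rad5 p) ^ 2 / (p 4) ^ 2) / Rad5 p)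
        + p 2 ^ 2 * (1 - (rad5 p - Rad5 p) ^ 2 / (p 4) ^ 2) / Rad5 p ^ 3
        - 2 * (rad5 p - Rad5 p) * p 2 ^ 2 / ((p 4) ^ 2 * Rad5 p ^ 2)) / Real.sqrt 2 := by
  obtain ⟨hz, hxy, hXY⟩ := hp
  have hz0 : p 4 ≠ 0 := hz.ne'
  have hr0 : rad5 p ≠ 0 := (Real.sqrt_pos.mpr hxy).ne'
  have hR0 : Rad5 p ≠ 0 := (Real.sqrt_pos.mpr hXY).ne'
  have hs2 : Real.sqrt 2 ≠ 0 := by positivity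
  obtain ⟨L, hL, L0, L1, L2, L3, L4⟩ := rad5_fderiv p hxy
  obtain ⟨M, hM, M0, M1, M2, M3, M4⟩ := Rad5_fderiv p hXY
  have c2 := (prj 2).hasFDerivAt (x := p)
  have c4 := (prj 4).hasFDerivAt (x := p)
  have hu := hL.sub hM
  have hzzinv := (hasDerivAt_inv (mul_ne_zero hz0 hz0)).comp_hasFDerivAt p (c4.mul c4)
  have hP := (hasFDerivAt_const (1:ℝ) p).sub ((hu.mul hu).mul hzzinv)
  have hrs := hM.mul (hasFDerivAt_const (Real.sqrt 2) p)
  have hrsinv := (hasDerivAt_inv (mul_ne_zero hR0 hs2)).comp_hasFDerivAt p hrs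
  have hG := (c2.mul (hP.mul hrsinv)).neg
  have heq : G2 =ᶠ[nhds p] (fun y : E5 => -(y 2 *
      ((1 - (rad5 y - Rad5 y) * (rad5 y - Rad5 y) * (y 4 * y 4)⁻¹) * (Rad5 y * Real.sqrt 2)⁻¹))) :=
    Filter.Eventually.of_forall (fun q => by rw [G2]; ring)
  have hst := HasFDerivAt.congr_of_eventuallyEq hG heq
  rw [pd5_eq hst]
  simp only [ContinuousLinearMap.add_apply, ContinuousLinearMap.smul_apply,
    ContinuousLinearMap.sub_apply, ContinuousLinearMap.zero_apply,
    ContinuousLinearMap.neg_apply,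
    ContinuousLinearMap.coe_smul', Pi.smul_apply, smul_eq_mul, PiLp.proj_apply,
    L0, L1, L2, L3, L4, M0, M1, M2, M3, M4, EuclideanSpace.single_apply]
  norm_num
  try simp only [Fin.reduceEq, if_true, if_false, reduceIte]
  field_simp
  ring

set_option maxHeartbeats 2000000 in
/-- second partial derivative `∂₃ G3` -/
lemma G3_pd {p : E5} (hp : p ∈ U12) :
    pd5 3 G3 p =
      (-((1 - (rad5 p - Rad5 p) ^ 2 / (p 4) ^ 2) / Rad5 p)
        + p 3 ^ 2 * (1 - (rad5 p - Rad5 p) ^ 2 / (p 4) ^ 2) / Rad5 p ^ 3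
        - 2 * (rad5 p - Rad5 p) * p 3 ^ 2 / ((p 4) ^ 2 * Rad5 p ^ 2)) / Real.sqrt 2 := by
  obtain ⟨hz, hxy, hXY⟩ := hp
  have hz0 : p 4 ≠ 0 := hz.ne'
  have hr0 : rad5 p ≠ 0 := (Real.sqrt_pos.mpr hxy).ne'
  have hR0 : Rad5 p ≠ 0 := (Real.sqrt_pos.mpr hXY).ne'
  have hs2 : Real.sqrt 2 ≠ 0 := by positivity
  obtain ⟨L, hL, L0, L1, L2, L3, L4⟩ := rad5_fderiv p hxy
  obtain ⟨M, hM, M0, M1, M2, M3, M4⟩ := Rad5_fderiv p hXY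
  have c3 := (prj 3).hasFDerivAt (x := p)
  have c4 := (prj 4).hasFDerivAt (x := p)
  have hu := hL.sub hM
  have hzzinv := (hasDerivAt_inv (mul_ne_zero hz0 hz0)).comp_hasFDerivAt p (c4.mul c4)
  have hP := (hasFDerivAt_const (1:ℝ) p).sub ((hu.mul hu).mul hzzinv)
  have hrs := hM.mul (hasFDerivAt_const (Real.sqrt 2) p)
  have hrsinv := (hasDerivAt_inv (mul_ne_zero hR0 hs2)).comp_hasFDerivAt p hrs
  have hG := (c3.mul (hP.mul hrsinv)).neg
  have heq : G3 =ᶠ[nhds p] (fun y : E5 => -(y 3 *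
      ((1 - (rad5 y - Rad5 y) * (rad5 y - Rad5 y) * (y 4 * y 4)⁻¹) * (Rad5 y * Real.sqrt 2)⁻¹))) :=
    Filter.Eventually.of_forall (fun q => by rw [G3]; ring)
  have hst := HasFDerivAt.congr_of_eventuallyEq hG heq
  rw [pd5_eq hst]
  simp only [ContinuousLinearMap.add_apply, ContinuousLinearMap.smul_apply,
    ContinuousLinearMap.sub_apply, ContinuousLinearMap.zero_apply,
    ContinuousLinearMap.neg_apply,
    ContinuousLinearMap.coe_smul', Pi.smul_apply, smul_eq_mul, PiLp.proj_apply,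
    L0, L1, L2, L3, L4, M0, M1, M2, M3, M4, EuclideanSpace.single_apply]
  norm_num
  try simp only [Fin.reduceEq, if_true, if_false, reduceIte]
  field_simp
  ring

set_option maxHeartbeats 2000000 in
/-- second partial derivative `∂₄ G4` -/
lemma G4_pd {p : E5} (hp : p ∈ U12) :
    pd5 4 G4 p =
      -(2 * (rad5 p - Rad5 p) ^ 3 / (Real.sqrt 2 * ((p 4) ^ 2) ^ 2)) := by
  obtain ⟨hz, hxy, hXY⟩ := hp
  have hz0 : p 4 ≠ 0 := hz.ne'
  have hr0 : rad5 p ≠ 0 := (Real.sqrt_pos.mpr hxy).ne'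
  have hR0 : Rad5 p ≠ 0 := (Real.sqrt_pos.mpr hXY).ne'
  have hs2 : Real.sqrt 2 ≠ 0 := by positivity
  obtain ⟨L, hL, L0, L1, L2, L3, L4⟩ := rad5_fderiv p hxy
  obtain ⟨M, hM, M0, M1, M2, M3, M4⟩ := Rad5_fderiv p hXY
  have c4 := (prj 4).hasFDerivAt (x := p)
  have hu := hL.sub hM
  have hden := (c4.mul (c4.mul c4)).const_mul (3 * Real.sqrt 2)
  have hden0 : 3 * Real.sqrt 2 * (p 4 * (p 4 * p 4)) ≠ 0 := by
    exact mul_ne_zero (mul_ne_zero (by norm_num) hs2)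
      (mul_ne_zero hz0 (mul_ne_zero hz0 hz0))
  have hdinv := (hasDerivAt_inv hden0).comp_hasFDerivAt p hden
  have hG := ((hu.mul (hu.mul hu)).mul hdinv).const_mul (2:ℝ)
  have heq : G4 =ᶠ[nhds p] (fun y : E5 => 2 *
      ((rad5 y - Rad5 y) * ((rad5 y - Rad5 y) * (rad5 y - Rad5 y)) *
        (3 * Real.sqrt 2 * (y 4 * (y 4 * y 4)))⁻¹)) :=
    Filter.Eventually.of_forall (fun q => by rw [G4]; ring)
  have hst := HasFDerivAt.congr_of_eventuallyEq hG heq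
  rw [pd5_eq hst]
  simp only [ContinuousLinearMap.add_apply, ContinuousLinearMap.smul_apply,
    ContinuousLinearMap.sub_apply, ContinuousLinearMap.zero_apply,
    ContinuousLinearMap.coe_smul', Pi.smul_apply, smul_eq_mul, PiLp.proj_apply,
    L0, L1, L2, L3, L4, M0, M1, M2, M3, M4, EuclideanSpace.single_apply]
  norm_num
  try simp only [Fin.reduceEq, if_true, if_false, reduceIte]
  field_simp
  ring

set_option maxHeartbeats 4000000 in
/-- the scalar algebraic identity -/
lemma final_algebra (x y X Y z r R s : ℝ) (hr : 0 < r) (hR : 0 < R) (hz : 0 < z)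
    (hs : s ^ 2 = 2) (hr2 : x ^ 2 + y ^ 2 = r ^ 2) (hR2 : X ^ 2 + Y ^ 2 = R ^ 2)
    (hcone : z ^ 2 = r ^ 2 + R ^ 2) :
    (x * ((1 - (r - R) ^ 2 / z ^ 2) / (r * s))) ^ 2
      + (y * ((1 - (r - R) ^ 2 / z ^ 2) / (r * s))) ^ 2
      + (-(X * ((1 - (r - R) ^ 2 / z ^ 2) / (R * s)))) ^ 2
      + (-(Y * ((1 - (r - R) ^ 2 / z ^ 2) / (R * s)))) ^ 2
      - (2 * (r - R) ^ 3 / (3 * (s * z ^ 3))) ^ 2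
      - 2 / 3 * ((r - R) * (1 - (r - R) ^ 2 / (3 * z ^ 2)) / s) *
        ( ((1 - (r - R) ^ 2 / z ^ 2) / r - x ^ 2 * (1 - (r - R) ^ 2 / z ^ 2) / r ^ 3
            - 2 * (r - R) * x ^ 2 / (z ^ 2 * r ^ 2)) / s
        + ((1 - (r - R) ^ 2 / z ^ 2) / r - y ^ 2 * (1 - (r - R) ^ 2 / z ^ 2) / r ^ 3
            - 2 * (r - R) * y ^ 2 / (z ^ 2 * r ^ 2)) / s
        + (-((1 - (r - R) ^ 2 / z ^ 2) / R) + X ^ 2 * (1 - (r - R) ^ 2 / z ^ 2) / R ^ 3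
            - 2 * (r - R) * X ^ 2 / (z ^ 2 * R ^ 2)) / s
        + (-((1 - (r - R) ^ 2 / z ^ 2) / R) + Y ^ 2 * (1 - (r - R) ^ 2 / z ^ 2) / R ^ 3
            - 2 * (r - R) * Y ^ 2 / (z ^ 2 * R ^ 2)) / s
        - (-(2 * (r - R) ^ 3 / (s * (z ^ 2) ^ 2))) )
      = 1 + ((r - R) * (1 - (r - R) ^ 2 / (3 * z ^ 2)) / s) ^ 4 *
          (-(27 * (z ^ 2) ^ 2) / (4 * (z ^ 2 + r * R) ^ 4)) := by
  have hs0 : s ≠ 0 := by intro h; rw [h] at hs; norm_num at hs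
  have hr0 : r ≠ 0 := hr.ne'
  have hR0 : R ≠ 0 := hR.ne'
  have hz0 : z ≠ 0 := hz.ne'
  have hrr0 : r ^ 2 + R ^ 2 ≠ 0 := by positivity
  have hrrR0 : r ^ 2 + R ^ 2 + r * R ≠ 0 := by positivity
  calc (x * ((1 - (r - R) ^ 2 / z ^ 2) / (r * s))) ^ 2
      + (y * ((1 - (r - R) ^ 2 / z ^ 2) / (r * s))) ^ 2
      + (-(X * ((1 - (r - R) ^ 2 / z ^ 2) / (R * s)))) ^ 2
      + (-(Y * ((1 - (r - R) ^ 2 / z ^ 2) / (R * s)))) ^ 2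
      - (2 * (r - R) ^ 3 / (3 * (s * z ^ 3))) ^ 2
      - 2 / 3 * ((r - R) * (1 - (r - R) ^ 2 / (3 * z ^ 2)) / s) *
        ( ((1 - (r - R) ^ 2 / z ^ 2) / r - x ^ 2 * (1 - (r - R) ^ 2 / z ^ 2) / r ^ 3
            - 2 * (r - R) * x ^ 2 / (z ^ 2 * r ^ 2)) / s
        + ((1 - (r - R) ^ 2 / z ^ 2) / r - y ^ 2 * (1 - (r - R) ^ 2 / z ^ 2) / r ^ 3
            - 2 * (r - R) * y ^ 2 / (z ^ 2 * r ^ 2)) / s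
        + (-((1 - (r - R) ^ 2 / z ^ 2) / R) + X ^ 2 * (1 - (r - R) ^ 2 / z ^ 2) / R ^ 3
            - 2 * (r - R) * X ^ 2 / (z ^ 2 * R ^ 2)) / s
        + (-((1 - (r - R) ^ 2 / z ^ 2) / R) + Y ^ 2 * (1 - (r - R) ^ 2 / z ^ 2) / R ^ 3
            - 2 * (r - R) * Y ^ 2 / (z ^ 2 * R ^ 2)) / s
        - (-(2 * (r - R) ^ 3 / (s * (z ^ 2) ^ 2))) )
      = ((x ^ 2 + y ^ 2) * ((1 - (r - R) ^ 2 / z ^ 2) / r) ^ 2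
          + (X ^ 2 + Y ^ 2) * ((1 - (r - R) ^ 2 / z ^ 2) / R) ^ 2
          - 4 * ((r - R) ^ 2) ^ 3 / (9 * (z ^ 2) ^ 3)
          - 2 / 3 * ((r - R) * (1 - (r - R) ^ 2 / (3 * z ^ 2))) *
            (2 * (1 - (r - R) ^ 2 / z ^ 2) / r
              - (x ^ 2 + y ^ 2) * (1 - (r - R) ^ 2 / z ^ 2) / r ^ 3
              - 2 * (r - R) * (x ^ 2 + y ^ 2) / (z ^ 2 * r ^ 2)
              - 2 * (1 - (r - R) ^ 2 / z ^ 2) / R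
              + (X ^ 2 + Y ^ 2) * (1 - (r - R) ^ 2 / z ^ 2) / R ^ 3
              - 2 * (r - R) * (X ^ 2 + Y ^ 2) / (z ^ 2 * R ^ 2)
              + 2 * (r - R) ^ 3 / ((z ^ 2) ^ 2))) / s ^ 2 := by ring
    _ = (r ^ 2 * ((1 - (r - R) ^ 2 / z ^ 2) / r) ^ 2
          + R ^ 2 * ((1 - (r - R) ^ 2 / z ^ 2) / R) ^ 2
          - 4 * ((r - R) ^ 2) ^ 3 / (9 * (z ^ 2) ^ 3)
          - 2 / 3 * ((r - R) * (1 - (r - R) ^ 2 / (3 * z ^ 2))) *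
            (2 * (1 - (r - R) ^ 2 / z ^ 2) / r
              - r ^ 2 * (1 - (r - R) ^ 2 / z ^ 2) / r ^ 3
              - 2 * (r - R) * r ^ 2 / (z ^ 2 * r ^ 2)
              - 2 * (1 - (r - R) ^ 2 / z ^ 2) / R
              + R ^ 2 * (1 - (r - R) ^ 2 / z ^ 2) / R ^ 3
              - 2 * (r - R) * R ^ 2 / (z ^ 2 * R ^ 2)
              + 2 * (r - R) ^ 3 / ((z ^ 2) ^ 2))) / s ^ 2 := by rw [hr2, hR2]
    _ = (r ^ 2 * ((1 - (r - R) ^ 2 / z ^ 2) / r) ^ 2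
          + R ^ 2 * ((1 - (r - R) ^ 2 / z ^ 2) / R) ^ 2
          - 4 * ((r - R) ^ 2) ^ 3 / (9 * (z ^ 2) ^ 3)
          - 2 / 3 * ((r - R) * (1 - (r - R) ^ 2 / (3 * z ^ 2))) *
            (2 * (1 - (r - R) ^ 2 / z ^ 2) / r
              - r ^ 2 * (1 - (r - R) ^ 2 / z ^ 2) / r ^ 3
              - 2 * (r - R) * r ^ 2 / (z ^ 2 * r ^ 2)
              - 2 * (1 - (r - R) ^ 2 / z ^ 2) / R
              + R ^ 2 * (1 - (r - R) ^ 2 / z ^ 2) / R ^ 3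
              - 2 * (r - R) * R ^ 2 / (z ^ 2 * R ^ 2)
              + 2 * (r - R) ^ 3 / ((z ^ 2) ^ 2))) / 2 := by rw [hs]
    _ = 1 + ((r - R) * (1 - (r - R) ^ 2 / (3 * z ^ 2))) ^ 4 *
          (-(27 * (z ^ 2) ^ 2) / (4 * (z ^ 2 + r * R) ^ 4)) / 4 := by
        rw [hcone]
        field_simp
        ring
    _ = 1 + ((r - R) * (1 - (r - R) ^ 2 / (3 * z ^ 2))) ^ 4 *
          (-(27 * (z ^ 2) ^ 2) / (4 * (z ^ 2 + r * R) ^ 4)) / (s ^ 2) ^ 2 := by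
        rw [hs]; norm_num
    _ = 1 + ((r - R) * (1 - (r - R) ^ 2 / (3 * z ^ 2)) / s) ^ 4 *
          (-(27 * (z ^ 2) ^ 2) / (4 * (z ^ 2 + r * R) ^ 4)) := by ring

lemma isOpen_U12 : IsOpen U12 := by
  have h : ∀ i : Fin 5, Continuous fun p : E5 => p i := fun i => (prj i).continuous
  have : U12 = {p : E5 | 0 < p 4} ∩ ({p : E5 | 0 < p 0 ^ 2 + p 1 ^ 2} ∩
      {p : E5 | 0 < p 2 ^ 2 + p 3 ^ 2}) := rfl
  rw [this]
  exact (isOpen_lt continuous_const (h 4)).inter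
    ((isOpen_lt continuous_const (((h 0).pow 2).add ((h 1).pow 2))).inter
      (isOpen_lt continuous_const (((h 2).pow 2).add ((h 3).pow 2))))

/-- the remainder term -/
noncomputable def Ttil (p : E5) : ℝ :=
  -(27 * ((p 4) ^ 2) ^ 2) / (4 * ((p 4) ^ 2 + rad5 p * Rad5 p) ^ 4)

lemma contDiffOn_rad5 : ContDiffOn ℝ (⊤ : ℕ∞) rad5 U12 := by
  intro p hp
  have h1 : ContDiffAt ℝ (⊤ : ℕ∞) (fun q : E5 => (q 0) ^ 2 + (q 1) ^ 2) p :=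
    (((prj 0).contDiff.pow 2).add ((prj 1).contDiff.pow 2)).contDiffAt
  exact ((Real.contDiffAt_sqrt hp.2.1.ne').comp p h1).contDiffWithinAt

lemma contDiffOn_Rad5 : ContDiffOn ℝ (⊤ : ℕ∞) Rad5 U12 := by
  intro p hp
  have h1 : ContDiffAt ℝ (⊤ : ℕ∞) (fun q : E5 => (q 2) ^ 2 + (q 3) ^ 2) p :=
    (((prj 2).contDiff.pow 2).add ((prj 3).contDiff.pow 2)).contDiffAt
  exact ((Real.contDiffAt_sqrt hp.2.2.ne').comp p h1).contDiffWithinAt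

lemma contDiffOn_Ttil : ContDiffOn ℝ (⊤ : ℕ∞) Ttil U12 := by
  apply ContDiffOn.div
  · exact (contDiff_const.mul (((prj 4).contDiff.pow 2).pow 2)).neg.contDiffOn
  · exact contDiffOn_const.mul ((((prj 4).contDiff.pow 2).contDiffOn.add
      (contDiffOn_rad5.mul contDiffOn_Rad5)).pow 4)
  · intro p hp
    have h1 : 0 < rad5 p := Real.sqrt_pos.mpr hp.2.1
    have h2 : 0 < Rad5 p := Real.sqrt_pos.mpr hp.2.2
    have h3 : 0 < p 4 := hp.1
    positivity

set_option maxHeartbeats 4000000 in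
/-- there is a smooth `T̃` on `U` such that at every point of the null
cone `{x² + y² + X² + Y² = z²}` in `U`, the Minkowski S-curvature expression
`|dσ̃|²_g̃ − (2/3)·σ̃·Δ^g̃ σ̃` equals `1 + σ̃⁴·T̃`; i.e. the induced defining function
for the Clifford torus solves the singular Yamabe equation to fourth order, so the
Clifford torus is a Willmore surface in `S³`. -/
theorem statement12 :
    ∃ T : EuclideanSpace ℝ (Fin 5) → ℝ, ContDiffOn ℝ (⊤ : ℕ∞) T U12 ∧
      ∀ p ∈ U12, (p 0) ^ 2 + (p 1) ^ 2 + (p 2) ^ 2 + (p 3) ^ 2 = (p 4) ^ 2 →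
        (pd5 0 sigmaTilde p) ^ 2 + (pd5 1 sigmaTilde p) ^ 2 + (pd5 2 sigmaTilde p) ^ 2
            + (pd5 3 sigmaTilde p) ^ 2 - (pd5 4 sigmaTilde p) ^ 2
          - (2 / 3) * sigmaTilde p *
            (pd5 0 (pd5 0 sigmaTilde) p + pd5 1 (pd5 1 sigmaTilde) p
              + pd5 2 (pd5 2 sigmaTilde) p + pd5 3 (pd5 3 sigmaTilde) p
              - pd5 4 (pd5 4 sigmaTilde) p)
        = 1 + sigmaTilde p ^ 4 * T p := by
  refine ⟨Ttil, contDiffOn_Ttil, fun p hp hcone => ?_⟩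
  obtain ⟨hz, hxy, hXY⟩ := hp
  have hp' : p ∈ U12 := ⟨hz, hxy, hXY⟩
  have hrpos : 0 < rad5 p := Real.sqrt_pos.mpr hxy
  have hRpos : 0 < Rad5 p := Real.sqrt_pos.mpr hXY
  have hr2 : (p 0) ^ 2 + (p 1) ^ 2 = rad5 p ^ 2 := (Real.sq_sqrt (by positivity)).symm
  have hR2 : (p 2) ^ 2 + (p 3) ^ 2 = Rad5 p ^ 2 := (Real.sq_sqrt (by positivity)).symm
  have hzc : (p 4) ^ 2 = rad5 p ^ 2 + Rad5 p ^ 2 := by linarith [hr2, hR2, hcone]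
  have hs : Real.sqrt 2 ^ 2 = 2 := Real.sq_sqrt (by norm_num)
  obtain ⟨e0, e1, e2, e3, e4⟩ := sigma_pd hp'
  have hmem := isOpen_U12.mem_nhds hp'
  have f0 : pd5 0 (pd5 0 sigmaTilde) p = pd5 0 G0 p := by
    have h0eq : pd5 0 sigmaTilde =ᶠ[nhds p] G0 :=
      Filter.eventuallyEq_of_mem hmem (fun q hq => (sigma_pd hq).1)
    rw [pd5, pd5, h0eq.fderiv_eq]
  have f1 : pd5 1 (pd5 1 sigmaTilde) p = pd5 1 G1 p := by
    have h1eq : pd5 1 sigmaTilde =ᶠ[nhds p] G1 :=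
      Filter.eventuallyEq_of_mem hmem (fun q hq => (sigma_pd hq).2.1)
    rw [pd5, pd5, h1eq.fderiv_eq]
  have f2 : pd5 2 (pd5 2 sigmaTilde) p = pd5 2 G2 p := by
    have h2eq : pd5 2 sigmaTilde =ᶠ[nhds p] G2 :=
      Filter.eventuallyEq_of_mem hmem (fun q hq => (sigma_pd hq).2.2.1)
    rw [pd5, pd5, h2eq.fderiv_eq]
  have f3 : pd5 3 (pd5 3 sigmaTilde) p = pd5 3 G3 p := by
    have h3eq : pd5 3 sigmaTilde =ᶠ[nhds p] G3 :=
      Filter.eventuallyEq_of_mem hmem (fun q hq => (sigma_pd hq).2.2.2.1)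
    rw [pd5, pd5, h3eq.fderiv_eq]
  have f4 : pd5 4 (pd5 4 sigmaTilde) p = pd5 4 G4 p := by
    have h4eq : pd5 4 sigmaTilde =ᶠ[nhds p] G4 :=
      Filter.eventuallyEq_of_mem hmem (fun q hq => (sigma_pd hq).2.2.2.2)
    rw [pd5, pd5, h4eq.fderiv_eq]
  rw [e0, e1, e2, e3, e4, f0, f1, f2, f3, f4,
    G0_pd hp', G1_pd hp', G2_pd hp', G3_pd hp', G4_pd hp']
  simp only [G0, G1, G2, G3, G4, sigmaTilde, Ttil]
  linear_combination final_algebra (p 0) (p 1) (p 2) (p 3) (p 4) (rad5 p) (Rad5 p)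
    (Real.sqrt 2) hrpos hRpos hz hs hr2 hR2 hzc
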